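/- Search Novelty Score satisfies the Dilution Axiom: if R' = R ∪ {τ(T_m, Q, Δ)} where T_m ∈ R and τ(T_m,Q,Δ) is T_m diluted by ⌈Δ·|Q|⌉ tuples of Q (0 < Δ ≤ 1), and nscore(Q,R,𝔸) > 0, then nscore(Q,R',𝔸') < nscore(Q,R,𝔸). -/
import Mathlib

noncomputable def novelty {α : Type*} [DecidableEq α] (β : ℝ) (v v' : Option α) : ℝ :=
  if v = v' then 0
  else if v.isSome ∧ v'.isSome then 1
  else β

noncomputable def tuple_nscore {α : Type*} [DecidableEq α] {n : ℕ} (β : Fin n → ℝ)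
    (t t' : Fin n → Option α) : ℝ :=
  (1 / (n : ℝ)) * ∑ i, novelty (β i) (t i) (t' i)

noncomputable def Ntup {τ : Type*} [DecidableEq τ] (score : τ → τ → ℝ)
    (T : Multiset τ) (t : τ) : ℝ :=
  sInf {x : ℝ | ∃ t' ∈ T.erase t, x = score t t'}

noncomputable def table_nscore {τ : Type*} [DecidableEq τ] (score : τ → τ → ℝ)
    (T : Multiset τ) : ℝ :=
  (1 / (Multiset.card T : ℝ)) * (T.map (Ntup score T)).sum

noncomputable def nscore {α : Type*} [DecidableEq α] {n : ℕ} (β : Fin n → ℝ)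
    (Q : Multiset (Fin n → Option α)) (R : Multiset (Multiset (Fin n → Option α))) : ℝ :=
  table_nscore (tuple_nscore β) (Q + R.sum)

lemma novelty_nonneg {α : Type*} [DecidableEq α] {b : ℝ} (hb : 0 ≤ b) (v v' : Option α) :
    0 ≤ novelty b v v' := by
  unfold novelty
  split_ifs
  · exact le_refl 0
  · exact zero_le_one
  · exact hb

lemma tuple_nscore_nonneg {α : Type*} [DecidableEq α] {n : ℕ} {β : Fin n → ℝ}
    (hβ : ∀ i, 0 ≤ β i ∧ β i ≤ 1) (t t' : Fin n → Option α) :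
    0 ≤ tuple_nscore β t t' := by
  unfold tuple_nscore
  apply mul_nonneg (by positivity)
  exact Finset.sum_nonneg fun i _ => novelty_nonneg (hβ i).1 _ _

lemma tuple_nscore_self {α : Type*} [DecidableEq α] {n : ℕ} (β : Fin n → ℝ)
    (t : Fin n → Option α) : tuple_nscore β t t = 0 := by
  unfold tuple_nscore novelty
  simp

lemma sum_map_le {ι : Type*} (s : Multiset ι) (f g : ι → ℝ) (h : ∀ i ∈ s, f i ≤ g i) :
    (s.map f).sum ≤ (s.map g).sum := by
  induction s using Multiset.induction_on with
  | empty => simp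
  | cons a s ih =>
    simp only [Multiset.map_cons, Multiset.sum_cons]
    exact add_le_add (h a (Multiset.mem_cons_self a s))
      (ih fun i hi => h i (Multiset.mem_cons_of_mem hi))

/-- Dilution Axiom: adding to R the dilution τ(T_m,Q,Δ) = T_m ⩁ Q' of a
table T_m ∈ R, where Q' ⊆ Q consists of ⌈Δ·|Q|⌉ query tuples (0 < Δ ≤ 1), strictly
decreases the search novelty score, provided nscore(Q,R) > 0. -/
theorem dilution_axiom {α : Type*} [DecidableEq α] {n : ℕ} (hn : 1 ≤ n)
    (β : Fin n → ℝ) (hβ : ∀ i, 0 ≤ β i ∧ β i ≤ 1)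
    (Q : Multiset (Fin n → Option α)) (hQ : Q ≠ 0)
    (R : Multiset (Multiset (Fin n → Option α)))
    (Tm : Multiset (Fin n → Option α)) (hTm : Tm ∈ R)
    (Δ : ℝ) (hΔ0 : 0 < Δ) (hΔ1 : Δ ≤ 1)
    (Q' : Multiset (Fin n → Option α)) (hQ'le : Q' ≤ Q)
    (hQ'card : (Multiset.card Q' : ℤ) = ⌈Δ * (Multiset.card Q : ℝ)⌉)
    (hpos : 0 < nscore β Q R) :
    nscore β Q ((Tm + Q') ::ₘ R) < nscore β Q R := by
  classical
  set score : (Fin n → Option α) → (Fin n → Option α) → ℝ := tuple_nscore β with hscore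
  set S : Multiset (Fin n → Option α) := Q + R.sum with hS
  set D : Multiset (Fin n → Option α) := Tm + Q' with hD
  -- the new pool is S + D
  have hpool : Q + ((Tm + Q') ::ₘ R).sum = S + D := by
    simp only [Multiset.sum_cons, hS, hD]
    abel
  -- D ≤ S
  have hTmle : Tm ≤ R.sum := by
    conv_rhs => rw [← Multiset.cons_erase hTm]
    rw [Multiset.sum_cons]
    exact Multiset.le_add_right _ _
  have hDle : D ≤ S := add_le_add hTmle hQ'le |>.trans_eq (by rw [hS, add_comm]) |>.trans_eq rfl
  -- D ≠ 0
  have hQcard : 1 ≤ Multiset.card Q := Multiset.card_pos.mpr hQ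
  have hQ'ne : Q' ≠ 0 := by
    intro h
    rw [h] at hQ'card
    simp only [Multiset.card_zero, Nat.cast_zero] at hQ'card
    have : (0 : ℝ) < Δ * (Multiset.card Q : ℝ) := by
      apply mul_pos hΔ0
      exact_mod_cast hQcard
    have := Int.ceil_pos.mpr this
    omega
  have hDne : D ≠ 0 := by
    intro h
    rw [hD] at h
    exact hQ'ne (Multiset.le_zero.mp (h ▸ Multiset.le_add_left Q' Tm))
  -- nonnegativity of Ntup
  have hscore_nonneg : ∀ t t', 0 ≤ score t t' := fun t t' => tuple_nscore_nonneg hβ t t'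
  have hbdd : ∀ (T : Multiset (Fin n → Option α)) (t),
      BddBelow {x : ℝ | ∃ t' ∈ T.erase t, x = score t t'} := by
    intro T t
    exact ⟨0, fun x ⟨t', _, hx⟩ => hx ▸ hscore_nonneg t t'⟩
  have hNtup_nonneg : ∀ (T : Multiset (Fin n → Option α)) (t), 0 ≤ Ntup score T t := by
    intro T t
    exact Real.sInf_nonneg (fun x ⟨t', _, hx⟩ => hx ▸ hscore_nonneg t t')
  -- for t ∈ D, Ntup over S + D is 0
  have hzero : ∀ t ∈ D, Ntup score (S + D) t = 0 := by
    intro t ht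
    have htS : t ∈ S := Multiset.mem_of_le hDle ht
    have hmem : t ∈ (S + D).erase t := by
      rw [Multiset.erase_add_right_pos S ht]
      exact Multiset.mem_add.mpr (Or.inl htS)
    have h0 : (0 : ℝ) ∈ {x : ℝ | ∃ t' ∈ (S + D).erase t, x = score t t'} :=
      ⟨t, hmem, (tuple_nscore_self β t).symm⟩
    exact le_antisymm (csInf_le (hbdd _ _) h0) (hNtup_nonneg _ _)
  -- for t ∈ S, Ntup over S + D ≤ Ntup over S
  have hmono : ∀ t ∈ S, Ntup score (S + D) t ≤ Ntup score S t := by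
    intro t ht
    by_cases hne : {x : ℝ | ∃ t' ∈ S.erase t, x = score t t'}.Nonempty
    · apply csInf_le_csInf (hbdd _ _) hne
      rintro x ⟨t', ht', hx⟩
      exact ⟨t', Multiset.mem_of_le (Multiset.erase_le_erase t (Multiset.le_add_right S D)) ht', hx⟩
    · -- S.erase t = 0, so S = {t}, and since 0 ≠ D ≤ S we get t ∈ D
      have herase : S.erase t = 0 := by
        by_contra h
        obtain ⟨t', ht'⟩ := Multiset.exists_mem_of_ne_zero h
        exact hne ⟨score t t', t', ht', rfl⟩
      have hSsing : S = {t} := by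
        have := Multiset.cons_erase ht
        rw [herase] at this
        simpa using this.symm
      have htD : t ∈ D := by
        obtain ⟨d, hd⟩ := Multiset.exists_mem_of_ne_zero hDne
        have : d ∈ S := Multiset.mem_of_le hDle hd
        rw [hSsing, Multiset.mem_singleton] at this
        rwa [this] at hd
      rw [hzero t htD]
      exact hNtup_nonneg _ _
  -- sum comparison
  have hsum : ((S + D).map (Ntup score (S + D))).sum ≤ (S.map (Ntup score S)).sum := by
    rw [Multiset.map_add, Multiset.sum_add]
    have h1 : (D.map (Ntup score (S + D))).sum = 0 := by
      apply Multiset.sum_eq_zero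
      intro x hx
      obtain ⟨t, ht, rfl⟩ := Multiset.mem_map.mp hx
      exact hzero t ht
    rw [h1, add_zero]
    exact sum_map_le S _ _ hmono
  -- cardinalities
  have hScard : 1 ≤ Multiset.card S := by
    rw [hS, Multiset.card_add]
    omega
  have hDcard : 1 ≤ Multiset.card D := Multiset.card_pos.mpr hDne
  have hcS : (0 : ℝ) < (Multiset.card S : ℝ) := by exact_mod_cast hScard
  have hcS' : (Multiset.card S : ℝ) < (Multiset.card (S + D) : ℝ) := by
    have hca : Multiset.card (S + D) = Multiset.card S + Multiset.card D := Multiset.card_add S D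
    rw [hca]
    push_cast
    have : (0:ℝ) < (Multiset.card D : ℝ) := by exact_mod_cast hDcard
    linarith
  -- unfold nscore and conclude
  have hA : 0 < (S.map (Ntup score S)).sum := by
    have := hpos
    unfold nscore table_nscore at this
    rw [← hS, ← hscore] at this
    by_contra h
    push_neg at h
    have : (1 / (Multiset.card S : ℝ)) * (S.map (Ntup score S)).sum ≤ 0 :=
      mul_nonpos_of_nonneg_of_nonpos (by positivity) h
    linarith
  unfold nscore table_nscore
  rw [hpool, ← hS, ← hscore]
  calc (1 / (Multiset.card (S + D) : ℝ)) * ((S + D).map (Ntup score (S + D))).sum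
      ≤ (1 / (Multiset.card (S + D) : ℝ)) * (S.map (Ntup score S)).sum := by
        apply mul_le_mul_of_nonneg_left hsum
        positivity
    _ < (1 / (Multiset.card S : ℝ)) * (S.map (Ntup score S)).sum := by
        apply mul_lt_mul_of_pos_right _ hA
        exact one_div_lt_one_div_of_lt hcS hcS'
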